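/- arXiv:1602.02712 — 3 statements merged into one kernel-verified Lean document; each statement's English description precedes it below -/
import Mathlib

section
/- (Upper parameter bound) Assume p ≠ q and for some integer r with 0 ≤ r ≤ min{p,q}: α·(2pq/(p+q) − r) ≤ r·ℓ − τ, where τ = (2pq/(p+q))(μV − μW). Then: if μV − μW < ℓ, α ≤ −(2·max{p,q}/|q−p|)(μV − μW) + ((p+q)/|q−p|)·ℓ; and if μV − μW ≥ ℓ, α ≤ −(μV − μW). -/
/-!
With `H = 2pq/(p+q)` and `d = μV - μW`, the hypothesis reads `α (H - r) ≤ r ℓ - H d`, and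
`H - r > 0` because the harmonic mean `H` of `p, q` strictly exceeds `min p q` when `p ≠ q`.
If `d ≥ ℓ`, the right side is at most `-(H - r) d`. If `d < ℓ`, the bound
`α ≤ (r ℓ - H d) / (H - r)` is increasing in `r`, so it is weakest at `r = min p q`,
where it equals the stated expression in `max p q` and `|q - p|`.
-/

section

variable {α d ℓ h m r : ℝ}

lemma le_neg_of_mul_sub_le (hr : 0 ≤ r) (hrh : r < h) (hℓd : ℓ ≤ d)
    (H : α * (h - r) ≤ r * ℓ - h * d) : α ≤ -d := by
  have : α * (h - r) ≤ -d * (h - r) := by nlinarith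
  exact le_of_mul_le_mul_right this (sub_pos.2 hrh)

lemma le_div_sub_of_mul_sub_le (hr : 0 ≤ r) (hrm : r ≤ m) (hmh : m < h) (hdℓ : d ≤ ℓ)
    (H : α * (h - r) ≤ r * ℓ - h * d) : α ≤ (m * ℓ - h * d) / (h - m) := by
  have hh : 0 ≤ h := by linarith
  calc α ≤ (r * ℓ - h * d) / (h - r) := (le_div_iff₀ (by linarith)).2 H
    _ ≤ (m * ℓ - h * d) / (h - m) := by
      rw [div_le_div_iff₀ (by linarith) (by linarith)]
      nlinarith [mul_nonneg (mul_nonneg hh (sub_nonneg.2 hrm)) (sub_nonneg.2 hdℓ)]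

end

section

variable {p q : ℝ}

lemma harmonic_sub_min (hp : 0 < p) (hq : 0 < q) :
    2 * p * q / (p + q) - min p q = min p q * |q - p| / (p + q) := by
  have hpq : p + q ≠ 0 := by positivity
  rcases le_total p q with hle | hle
  · rw [min_eq_left hle, abs_of_nonneg (sub_nonneg.2 hle)]
    field_simp
    ring
  · rw [min_eq_right hle, abs_of_nonpos (sub_nonpos.2 hle)]
    field_simp
    ring

lemma min_lt_harmonic (hp : 0 < p) (hq : 0 < q) (hpq : p ≠ q) :
    min p q < 2 * p * q / (p + q) := by
  rw [← sub_pos, harmonic_sub_min hp hq]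
  exact div_pos (mul_pos (lt_min hp hq) (abs_pos.2 (sub_ne_zero.2 hpq.symm))) (by linarith)

lemma min_mul_sub_div_harmonic_sub_min (hp : 0 < p) (hq : 0 < q) (hpq : p ≠ q) (d ℓ : ℝ) :
    (min p q * ℓ - 2 * p * q / (p + q) * d) / (2 * p * q / (p + q) - min p q)
      = -(2 * max p q / |q - p|) * d + ((p + q) / |q - p|) * ℓ := by
  have hpq' : p + q ≠ 0 := by positivity
  rw [harmonic_sub_min hp hq]
  rcases hpq.lt_or_gt with hlt | hlt
  · have : q - p ≠ 0 := by linarith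
    rw [min_eq_left hlt.le, max_eq_right hlt.le, abs_of_pos (sub_pos.2 hlt)]
    field_simp
    ring
  · have : p - q ≠ 0 := by linarith
    rw [min_eq_right hlt.le, max_eq_left hlt.le, abs_of_neg (sub_neg.2 hlt)]
    field_simp
    ring

end

theorem upper_parameter_bound_general (p q : ℕ) (hp : 0 < p) (hq : 0 < q) (hpq : p ≠ q)
    (μV μW α ℓ : ℝ) (r : ℤ)
    (hr0 : 0 ≤ r) (hrm : r ≤ (min p q : ℕ))
    (h : α * (2 * (p : ℝ) * q / (p + q) - (r : ℝ))
          ≤ (r : ℝ) * ℓ - (2 * (p : ℝ) * q / (p + q)) * (μV - μW)) :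
    (μV - μW < ℓ →
      α ≤ -(2 * ((max p q : ℕ) : ℝ) / |(q : ℝ) - p|) * (μV - μW)
            + (((p : ℝ) + q) / |(q : ℝ) - p|) * ℓ)
    ∧ (μV - μW ≥ ℓ → α ≤ -(μV - μW)) := by
  have hP : (0 : ℝ) < p := by exact_mod_cast hp
  have hQ : (0 : ℝ) < q := by exact_mod_cast hq
  have hPQ : (p : ℝ) ≠ q := by exact_mod_cast hpq
  have hR0 : (0 : ℝ) ≤ r := by exact_mod_cast hr0
  have hRm : (r : ℝ) ≤ min (p : ℝ) q := by exact_mod_cast hrm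
  have hmh := min_lt_harmonic hP hQ hPQ
  refine ⟨fun hdℓ => ?_, fun hℓd => le_neg_of_mul_sub_le hR0 (hRm.trans_lt hmh) hℓd h⟩
  rw [Nat.cast_max, ← min_mul_sub_div_harmonic_sub_min hP hQ hPQ]
  exact le_div_sub_of_mul_sub_le hR0 hRm hmh hdℓ.le h

theorem upper_parameter_bound (p q : ℕ) (hp : 0 < p) (hq : 0 < q) (hpq : p ≠ q)
    (μV μW α ℓ : ℝ) (hℓ : 0 < ℓ) (r : ℤ)
    (hr0 : 0 ≤ r) (hrm : r ≤ (min p q : ℕ))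
    (h : α * (2 * (p : ℝ) * q / (p + q) - (r : ℝ))
          ≤ (r : ℝ) * ℓ - (2 * (p : ℝ) * q / (p + q)) * (μV - μW)) :
    (μV - μW < ℓ →
      α ≤ -(2 * ((max p q : ℕ) : ℝ) / |(q : ℝ) - p|) * (μV - μW)
            + (((p : ℝ) + q) / |(q : ℝ) - p|) * ℓ)
    ∧ (μV - μW ≥ ℓ → α ≤ -(μV - μW)) :=
  upper_parameter_bound_general p q hp hq hpq μV μW α ℓ r hr0 hrm h
end

section
/- (Lower parameter bound) Assume p ≠ q and for some integer r with 0 ≤ r ≤ min{p,q}: −τ ≤ r·ℓ + α(2pq/(p+q) − r), where τ = (2pq/(p+q))(μV − μW). Then: if μV − μW > −ℓ, α ≥ −(2·max{p,q}/|q−p|)(μV − μW) − ((p+q)/|q−p|)·ℓ; and if μV − μW ≤ −ℓ, α ≥ −(μV − μW). -/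
/-!
Put `δ = μV - μW`, `s = 2pq/(p+q)`, `m = min p q`, `M = max p q`. The hypothesis rearranges to
`(α + δ)(s - r) ≥ -r(δ + ℓ)`, and `s - r ≥ s - m = m(M - m)/(m + M) > 0`. If `δ ≤ -ℓ` the right-hand
side is nonnegative, so `α ≥ -δ`. Otherwise `α + δ ≥ -(r/(s - r))(δ + ℓ)`, and `r/(s - r)` is
largest at `r = m`, where it equals `(m + M)/(M - m)`.
-/

section

variable {K : Type*} [Field K]

theorem two_mul_mul_div_add_sub_left {m M : K} (hmM : m + M ≠ 0) :
    2 * m * M / (m + M) - m = m * (M - m) / (m + M) := by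
  field_simp
  ring

variable [LinearOrder K] [IsStrictOrderedRing K]

theorem ge_of_neg_mul_le_add_mul_sub {s m r δ ℓ α : K} (hr0 : 0 ≤ r) (hrm : r ≤ m) (hms : m < s)
    (h : -(s * δ) ≤ r * ℓ + α * (s - r)) :
    (δ > -ℓ → α ≥ -δ - m / (s - m) * (δ + ℓ)) ∧ (δ ≤ -ℓ → α ≥ -δ) := by
  have hsr : 0 < s - r := by linarith
  have key : -(r * (δ + ℓ)) ≤ (α + δ) * (s - r) := by linarith
  constructor
  · intro hδ
    have hsm : 0 < s - m := by linarith
    have hratio : r / (s - r) ≤ m / (s - m) := by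
      rw [div_le_div_iff₀ hsr hsm]
      nlinarith
    have hlow : -(r * (δ + ℓ)) / (s - r) ≤ α + δ := (div_le_iff₀ hsr).mpr key
    have := mul_le_mul_of_nonneg_right hratio (by linarith : 0 ≤ δ + ℓ)
    calc -δ - m / (s - m) * (δ + ℓ) ≤ -δ - r / (s - r) * (δ + ℓ) := by linarith
      _ = -(r * (δ + ℓ)) / (s - r) - δ := by ring
      _ ≤ α := by linarith
  · intro hδ
    have hprod : 0 ≤ (α + δ) * (s - r) := le_trans (by nlinarith) key
    linarith [nonneg_of_mul_nonneg_left hprod hsr]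

variable {m M : K}

theorem lt_two_mul_mul_div_add (hm : 0 < m) (hmM : m < M) : m < 2 * m * M / (m + M) := by
  have : 0 < m * (M - m) / (m + M) := by
    apply div_pos <;> nlinarith
  linarith [two_mul_mul_div_add_sub_left (m := m) (M := M) (by linarith)]

theorem div_two_mul_mul_div_add_sub_left (hm : 0 < m) (hmM : m < M) :
    m / (2 * m * M / (m + M) - m) = (m + M) / (M - m) := by
  rw [two_mul_mul_div_add_sub_left (by linarith)]
  field_simp [hm.ne', (sub_pos.mpr hmM).ne']

end

theorem lower_parameter_bound_general (p q : ℕ) (hp : 0 < p) (hq : 0 < q) (hpq : p ≠ q)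
    (μV μW α ℓ : ℝ) (r : ℤ)
    (hr0 : 0 ≤ r) (hrm : r ≤ (min p q : ℕ))
    (h : -((2 * (p : ℝ) * q / (p + q)) * (μV - μW))
          ≤ (r : ℝ) * ℓ + α * (2 * (p : ℝ) * q / (p + q) - (r : ℝ))) :
    (μV - μW > -ℓ →
      α ≥ -(2 * ((max p q : ℕ) : ℝ) / |(q : ℝ) - p|) * (μV - μW)
            - (((p : ℝ) + q) / |(q : ℝ) - p|) * ℓ)
    ∧ (μV - μW ≤ -ℓ → α ≥ -(μV - μW)) := by
  -- Everything is symmetric in `p, q`, so working with `min` and `max` avoids the case split.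
  have hsum : (p : ℝ) + q = min (p : ℝ) q + max (p : ℝ) q := (min_add_max _ _).symm
  have hprod : (p : ℝ) * q = min (p : ℝ) q * max (p : ℝ) q := (min_mul_max _ _).symm
  have hrm' : (r : ℝ) ≤ min (p : ℝ) q := by exact_mod_cast hrm
  rw [Nat.cast_max, ← max_sub_min_eq_abs, hsum]
  rw [mul_assoc 2, hprod, hsum, ← mul_assoc] at h
  set m := min (p : ℝ) q
  set M := max (p : ℝ) q
  have hm : 0 < m := lt_min (by exact_mod_cast hp) (by exact_mod_cast hq)
  have hmM : m < M := min_lt_max.mpr (Nat.cast_injective.ne hpq)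
  obtain ⟨hgt, hle⟩ := ge_of_neg_mul_le_add_mul_sub (by exact_mod_cast hr0) hrm'
    (lt_two_mul_mul_div_add hm hmM) h
  refine ⟨fun hδ => Eq.trans_le ?_ (hgt hδ), hle⟩
  rw [div_two_mul_mul_div_add_sub_left hm hmM]
  field_simp [(sub_pos.mpr hmM).ne']
  ring

theorem lower_parameter_bound (p q : ℕ) (hp : 0 < p) (hq : 0 < q) (hpq : p ≠ q)
    (μV μW α ℓ : ℝ) (hℓ : 0 < ℓ) (r : ℤ)
    (hr0 : 0 ≤ r) (hrm : r ≤ (min p q : ℕ))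
    (h : -((2 * (p : ℝ) * q / (p + q)) * (μV - μW))
          ≤ (r : ℝ) * ℓ + α * (2 * (p : ℝ) * q / (p + q) - (r : ℝ))) :
    (μV - μW > -ℓ →
      α ≥ -(2 * ((max p q : ℕ) : ℝ) / |(q : ℝ) - p|) * (μV - μW)
            - (((p : ℝ) + q) / |(q : ℝ) - p|) * ℓ)
    ∧ (μV - μW ≤ -ℓ → α ≥ -(μV - μW)) :=
  lower_parameter_bound_general p q hp hq hpq μV μW α ℓ r hr0 hrm h
end

section
/- Suppose p ≥ q, μV − μW > −ℓ, and for an α-semistable bundle with n = rk(ker β) > 0 one has α ≥ (2pq/(n(p+q)+q(p−q)))(μW − μV − ℓ) + ℓ. Then for any integer i ≥ 1, if α < α_{i−1} := (2pq/(q(p−q)+i(p+q)))(μW−μV−ℓ)+ℓ, it follows that n < i. In particular if α < α_0 = (2pq/(pq−q²+p+q))(μW−μV−ℓ)+ℓ then n = 0 (β is injective). -/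
theorem kernel_rank_bound (p q : ℕ) (hq : 1 ≤ q) (hpq : q ≤ p)
    (μV μW α ℓ : ℝ) (hℓ : 0 < ℓ) (hμ : μV - μW > -ℓ)
    (n : ℕ) (hn : n ≤ q)
    (hsemi : 0 < n → α ≥ 2 * (p : ℝ) * q
        / ((n : ℝ) * ((p : ℝ) + q) + (q : ℝ) * ((p : ℝ) - q))
        * (μW - μV - ℓ) + ℓ) :
    ∀ i : ℕ, 1 ≤ i →
      α < 2 * (p : ℝ) * q
          / ((q : ℝ) * ((p : ℝ) - q) + (i : ℝ) * ((p : ℝ) + q))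
          * (μW - μV - ℓ) + ℓ →
      n < i := by
  intro i hi hlt
  by_contra h
  push_neg at h  -- i ≤ n
  have hn0 : 0 < n := lt_of_lt_of_le hi h
  have hge := hsemi hn0
  have hp1 : (1:ℝ) ≤ p := by exact_mod_cast le_trans hq hpq
  have hq1 : (1:ℝ) ≤ q := by exact_mod_cast hq
  have hqp : (q:ℝ) ≤ p := by exact_mod_cast hpq
  have hin : (i:ℝ) ≤ n := by exact_mod_cast h
  have hi1 : (1:ℝ) ≤ i := by exact_mod_cast hi
  have hD : μW - μV - ℓ < 0 := by linarith
  have hC : 0 < 2 * (p:ℝ) * q := by nlinarith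
  have hdi : 0 < (q:ℝ) * ((p:ℝ) - q) + (i:ℝ) * ((p:ℝ) + q) := by nlinarith
  have hdn : 0 < (n:ℝ) * ((p:ℝ) + q) + (q:ℝ) * ((p:ℝ) - q) := by nlinarith
  have hdle : (q:ℝ) * ((p:ℝ) - q) + (i:ℝ) * ((p:ℝ) + q)
      ≤ (n:ℝ) * ((p:ℝ) + q) + (q:ℝ) * ((p:ℝ) - q) := by nlinarith
  have hfrac : 2 * (p:ℝ) * q / ((n:ℝ) * ((p:ℝ) + q) + (q:ℝ) * ((p:ℝ) - q))
      ≤ 2 * (p:ℝ) * q / ((q:ℝ) * ((p:ℝ) - q) + (i:ℝ) * ((p:ℝ) + q)) :=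
    div_le_div_of_nonneg_left hC.le hdi hdle
  have : 2 * (p:ℝ) * q / ((q:ℝ) * ((p:ℝ) - q) + (i:ℝ) * ((p:ℝ) + q)) * (μW - μV - ℓ)
      ≤ 2 * (p:ℝ) * q / ((n:ℝ) * ((p:ℝ) + q) + (q:ℝ) * ((p:ℝ) - q)) * (μW - μV - ℓ) :=
    mul_le_mul_of_nonpos_right hfrac hD.le
  linarith
end
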